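/- For each vector a ∈ ℝ^n, the stable partition is unique: if 0 = m_0 < m_1 < ... < m_{q_1} = n and 0 = m'_0 < m'_1 < ... < m'_{q_2} = n are both stable partitions of a (each block irreducible, block means nondecreasing), then q_1 = q_2 and m_i = m'_i for all i. -/

import Mathlib

open Finset

def IrreducibleVec (m : ℕ) (a : ℕ → ℝ) : Prop :=
  ∀ k, 0 < k → k < m →
    (∑ i ∈ Finset.range k, a i) / (k : ℝ) >
      (∑ i ∈ Finset.Ico k m, a i) / ((m : ℝ) - (k : ℝ))

noncomputable def blockMean (a : ℕ → ℝ) (i j : ℕ) : ℝ :=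
  (∑ l ∈ Finset.Ico i j, a l) / ((j : ℝ) - (i : ℝ))

def IsStablePartition (n q : ℕ) (a : ℕ → ℝ) (m : ℕ → ℕ) : Prop :=
  0 < q ∧ m 0 = 0 ∧ m q = n ∧ (∀ i < q, m i < m (i + 1)) ∧
  (∀ i < q, IrreducibleVec (m (i + 1) - m i) (fun j => a (m i + j))) ∧
  (∀ i, i + 1 < q → blockMean a (m i) (m (i + 1)) ≤ blockMean a (m (i + 1)) (m (i + 2)))

/-! Let `S` be the partial sums of `a`. Irreducibility of a block says that on it the graph of
`S` lies strictly above the chord joining the block's endpoints, and the chords of consecutive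
blocks have nondecreasing slopes. Hence the breakpoints of a stable partition are exactly the
indices `k ≤ n` at which `(k, S k)` lies on the lower convex hull of the graph of `S` over
`[0, n]`. This set does not depend on the partition, and a strictly increasing enumeration of a
finite set is unique. -/

def prefixSum (a : ℕ → ℝ) (k : ℕ) : ℝ := ∑ i ∈ range k, a i

def OnLowerHull (a : ℕ → ℝ) (n k : ℕ) : Prop :=
  ∃ c : ℝ, ∀ i ≤ n, prefixSum a k + c * ((i : ℝ) - k) ≤ prefixSum a i

theorem StrictMonoOn.eq_of_image_Iic_eq {α : Type*} [LinearOrder α] {f g : ℕ → α} {p q : ℕ}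
    (hf : StrictMonoOn f (Set.Iic p)) (hg : StrictMonoOn g (Set.Iic q))
    (h : f '' Set.Iic p = g '' Set.Iic q) : p = q ∧ Set.EqOn f g (Set.Iic p) := by
  have hpq : p = q := by
    have := congrArg Set.ncard h
    rwa [hf.injOn.ncard_image, hg.injOn.ncard_image, Set.ncard_Iic_nat, Set.ncard_Iic_nat,
      Nat.add_right_cancel_iff] at this
  subst hpq
  have range_eq {f : ℕ → α} : Set.range (fun i : Fin (p + 1) => f i) = f '' Set.Iic p := by
    ext x
    exact ⟨fun ⟨i, hi⟩ => ⟨i, Nat.le_of_lt_succ i.2, hi⟩,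
      fun ⟨i, hi, hx⟩ => ⟨⟨i, Nat.lt_succ_of_le hi⟩, hx⟩⟩
  have fin_strictMono {f : ℕ → α} (hf : StrictMonoOn f (Set.Iic p)) :
      StrictMono (fun i : Fin (p + 1) => f i) := fun i j hij =>
    hf (Nat.le_of_lt_succ i.2) (Nat.le_of_lt_succ j.2) hij
  have hfg := ((fin_strictMono hf).range_inj (fin_strictMono hg)).1 <| by
    rw [range_eq, range_eq, h]
  exact ⟨rfl, fun i hi => congrFun hfg ⟨i, Nat.lt_succ_of_le hi⟩⟩

section

variable {a : ℕ → ℝ}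

theorem sum_Ico_eq_prefixSum_sub {i j : ℕ} (h : i ≤ j) :
    ∑ l ∈ Ico i j, a l = prefixSum a j - prefixSum a i :=
  sum_Ico_eq_sub a h

theorem sum_range_add_eq_prefixSum_sub {u w : ℕ} (h : u ≤ w) :
    ∑ i ∈ range (w - u), a (u + i) = prefixSum a w - prefixSum a u := by
  rw [← sum_Ico_eq_sum_range, sum_Ico_eq_prefixSum_sub h]

theorem prefixSum_eq_add_blockMean_mul {u v : ℕ} (h : u ≤ v) :
    prefixSum a v = prefixSum a u + blockMean a u v * ((v : ℝ) - u) := by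
  rcases h.eq_or_lt with rfl | h
  · simp
  have hvu : (v : ℝ) - u ≠ 0 := sub_ne_zero.2 (by exact_mod_cast h.ne')
  rw [blockMean, sum_Ico_eq_prefixSum_sub h.le, div_mul_cancel₀ _ hvu]
  ring

theorem IrreducibleVec.sub_mul_lt_sub_mul {u v k : ℕ}
    (h : IrreducibleVec (v - u) (fun j => a (u + j))) (huk : u < k) (hkv : k < v) :
    (prefixSum a v - prefixSum a k) * ((k : ℝ) - u) <
      (prefixSum a k - prefixSum a u) * ((v : ℝ) - k) := by
  have hmean := h (k - u) (by omega) (by omega)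
  simp only at hmean
  rw [sum_range_add_eq_prefixSum_sub huk.le, sum_Ico_eq_sub _ (by omega),
    sum_range_add_eq_prefixSum_sub (by omega), sum_range_add_eq_prefixSum_sub huk.le,
    Nat.cast_sub huk.le, Nat.cast_sub (huk.trans hkv).le, gt_iff_lt,
    div_lt_div_iff₀ (by linarith [(Nat.cast_lt (α := ℝ)).2 hkv])
      (by linarith [(Nat.cast_lt (α := ℝ)).2 huk])] at hmean
  linarith

theorem IrreducibleVec.add_blockMean_mul_le {u v k : ℕ}
    (h : IrreducibleVec (v - u) (fun j => a (u + j))) (huk : u ≤ k) (hkv : k ≤ v) :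
    prefixSum a u + blockMean a u v * ((k : ℝ) - u) ≤ prefixSum a k := by
  rcases huk.eq_or_lt with rfl | huk
  · simp
  rcases hkv.eq_or_lt with rfl | hkv
  · exact (prefixSum_eq_add_blockMean_mul huk.le).ge
  have hcross := h.sub_mul_lt_sub_mul huk hkv
  have hsum := prefixSum_eq_add_blockMean_mul (a := a) (huk.trans hkv).le
  have hvu : (0 : ℝ) < v - u := sub_pos.2 (by exact_mod_cast huk.trans hkv)
  refine le_of_lt (lt_of_sub_pos (pos_of_mul_pos_left ?_ hvu.le))
  rw [hsum] at hcross
  linear_combination hcross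

end

namespace IsStablePartition

variable {n q : ℕ} {a : ℕ → ℝ} {m : ℕ → ℕ}

theorem strictMonoOn (h : IsStablePartition n q a m) : StrictMonoOn m (Set.Iic q) :=
  strictMonoOn_Iic_of_lt_succ fun t ht => h.2.2.2.1 t ht

theorem apply_le (h : IsStablePartition n q a m) {t : ℕ} (ht : t ≤ q) : m t ≤ n :=
  h.2.2.1 ▸ h.strictMonoOn.monotoneOn ht (Set.mem_Iic.2 le_rfl) ht

theorem monotoneOn_blockMean (h : IsStablePartition n q a m) :
    MonotoneOn (fun t => blockMean a (m t) (m (t + 1))) (Set.Iio q) :=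
  monotoneOn_of_le_succ Set.ordConnected_Iio fun t _ _ ht => h.2.2.2.2.2 t ht

theorem le_prefixSum_of_le (h : IsStablePartition n q a m) {c : ℝ} {t : ℕ} (ht : t ≤ q)
    (hc : ∀ s < t, blockMean a (m s) (m (s + 1)) ≤ c) :
    ∀ i ≤ m t, prefixSum a (m t) + c * ((i : ℝ) - m t) ≤ prefixSum a i := by
  induction t with
  | zero =>
    intro i hi
    obtain rfl : i = 0 := by rw [h.2.1] at hi; omega
    simp [h.2.1]
  | succ t ih =>
    intro i hi
    have hlt := h.2.2.2.1 t ht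
    have hblock := prefixSum_eq_add_blockMean_mul (a := a) hlt.le
    have hct := hc t t.lt_succ_self
    rcases le_or_gt i (m t) with hit | hit
    · have hlen : (0 : ℝ) ≤ (m (t + 1) : ℝ) - m t := sub_nonneg.2 (by exact_mod_cast hlt.le)
      have hprev := ih (by omega) (fun s hs => hc s (by omega)) i hit
      linarith [mul_le_mul_of_nonneg_right hct hlen]
    · have hchord := (h.2.2.2.2.1 t ht).add_blockMean_mul_le hit.le hi
      have hrest : (0 : ℝ) ≤ (m (t + 1) : ℝ) - i := sub_nonneg.2 (by exact_mod_cast hi)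
      linarith [mul_le_mul_of_nonneg_right hct hrest]

theorem le_prefixSum_of_ge (h : IsStablePartition n q a m) {c : ℝ} {t : ℕ}
    (hc : ∀ s, t ≤ s → s < q → c ≤ blockMean a (m s) (m (s + 1))) {t' : ℕ}
    (htt' : t ≤ t') (ht' : t' ≤ q) :
    ∀ j, m t ≤ j → j ≤ m t' →
      prefixSum a (m t) + c * ((j : ℝ) - m t) ≤ prefixSum a j := by
  induction t', htt' using Nat.le_induction with
  | base =>
    intro j hj hj'
    rw [le_antisymm hj' hj]
    simp
  | succ t' htt' ih =>
    intro j hj hj'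
    rcases le_or_gt j (m t') with hjt | hjt
    · exact ih (by omega) j hj hjt
    have hmt : m t ≤ m t' :=
      h.strictMonoOn.monotoneOn (Set.mem_Iic.2 (by omega)) (Set.mem_Iic.2 (by omega)) htt'
    have hprev := ih (by omega) (m t') hmt le_rfl
    have hchord := (h.2.2.2.2.1 t' (by omega)).add_blockMean_mul_le hjt.le hj'
    have hct := hc t' htt' (by omega)
    have hlen : (0 : ℝ) ≤ (j : ℝ) - m t' := sub_nonneg.2 (by exact_mod_cast hjt.le)
    linarith [mul_le_mul_of_nonneg_right hct hlen]

theorem onLowerHull (h : IsStablePartition n q a m) {t : ℕ} (ht : t ≤ q) :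
    OnLowerHull a n (m t) := by
  -- the slope of block `t`, or of the last block when `t = q`
  set t₀ := min t (q - 1)
  have hmono := h.monotoneOn_blockMean
  refine ⟨blockMean a (m t₀) (m (t₀ + 1)), fun i hi => ?_⟩
  rcases le_total i (m t) with hit | hit
  · exact h.le_prefixSum_of_le ht (fun s hs => hmono (Set.mem_Iio.2 (by omega))
      (Set.mem_Iio.2 (by have := h.1; omega)) (by omega)) i hit
  · exact h.le_prefixSum_of_ge (fun s hts hs => hmono (Set.mem_Iio.2 (by have := h.1; omega))
      (Set.mem_Iio.2 hs) (by omega)) ht le_rfl i hit (h.2.2.1 ▸ hi)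

theorem exists_eq_of_onLowerHull (h : IsStablePartition n q a m) {k : ℕ} (hkn : k ≤ n)
    (hk : OnLowerHull a n k) : ∃ t ≤ q, m t = k := by
  rcases hkn.eq_or_lt with rfl | hkn
  · exact ⟨q, le_rfl, h.2.2.1⟩
  set s := Nat.findGreatest (fun s => m s ≤ k) q
  have hs : m s ≤ k :=
    Nat.findGreatest_spec (P := fun s => m s ≤ k) (Nat.zero_le q) (by simp [h.2.1])
  have hsq : s < q := lt_of_le_of_ne (Nat.findGreatest_le q) fun hsq => by
    rw [hsq, h.2.2.1] at hs; omega
  have hks : k < m (s + 1) := not_le.1 <|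
    Nat.findGreatest_is_greatest (P := fun s => m s ≤ k) (Nat.lt_succ_self s) hsq
  rcases hs.eq_or_lt with hs | hs
  · exact ⟨s, hsq.le, hs⟩
  obtain ⟨c, hc⟩ := hk
  have hleft := hc (m s) (by omega)
  have hright := hc (m (s + 1)) (h.apply_le hsq)
  have hcross := (h.2.2.2.2.1 s hsq).sub_mul_lt_sub_mul hs hks
  have h₁ : (0 : ℝ) ≤ k - m s := sub_nonneg.2 (by exact_mod_cast hs.le)
  have h₂ : (0 : ℝ) ≤ m (s + 1) - k := sub_nonneg.2 (by exact_mod_cast hks.le)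
  have hleft' : prefixSum a k - prefixSum a (m s) ≤ c * (k - m s) := by linarith
  have hright' : c * (m (s + 1) - k) ≤ prefixSum a (m (s + 1)) - prefixSum a k := by linarith
  linarith [mul_le_mul_of_nonneg_right hleft' h₂, mul_le_mul_of_nonneg_right hright' h₁]

theorem image_Iic_eq (h : IsStablePartition n q a m) :
    m '' Set.Iic q = {k | k ≤ n ∧ OnLowerHull a n k} := by
  ext k
  constructor
  · rintro ⟨t, ht, rfl⟩
    exact ⟨h.apply_le ht, h.onLowerHull ht⟩
  · rintro ⟨hkn, hk⟩
    obtain ⟨t, ht, rfl⟩ := h.exists_eq_of_onLowerHull hkn hk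
    exact ⟨t, ht, rfl⟩

end IsStablePartition

theorem stmt3_general (n : ℕ) (a : ℕ → ℝ) (q₁ q₂ : ℕ) (m₁ m₂ : ℕ → ℕ)
    (h₁ : IsStablePartition n q₁ a m₁) (h₂ : IsStablePartition n q₂ a m₂) :
    q₁ = q₂ ∧ ∀ i ≤ q₁, m₁ i = m₂ i :=
  h₁.strictMonoOn.eq_of_image_Iic_eq h₂.strictMonoOn <| by
    rw [h₁.image_Iic_eq, h₂.image_Iic_eq]

theorem stmt3 (n : ℕ) (hn : 0 < n) (a : ℕ → ℝ) (q₁ q₂ : ℕ) (m₁ m₂ : ℕ → ℕ)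
    (h₁ : IsStablePartition n q₁ a m₁) (h₂ : IsStablePartition n q₂ a m₂) :
    q₁ = q₂ ∧ ∀ i ≤ q₁, m₁ i = m₂ i :=
  stmt3_general n a q₁ q₂ m₁ m₂ h₁ h₂
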